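/- arXiv:1003.6039 — 2 statements merged into one kernel-verified Lean document; each statement's English description precedes it below -/
import Mathlib

section
/- Let κ_1, …, κ_n be non-negative real numbers with κ_1 ≤ 1. Assume there are a constant A ≥ 0, non-negative numbers A_{k,l} for 1 ≤ l < k ≤ n, and positive numbers σ_2, …, σ_n (set σ_1 := 1) such that for every ε > 0 and every 2 ≤ k ≤ n one has κ_k ≤ A/σ_k + 0.4·ε + (1/(ε·σ_k))·Σ_{l=1}^{k−1} A_{k,l}·κ_l. Let α_n = sup_{2 ≤ k ≤ n} Σ_{l=1}^{k−1} (σ_k/σ_l)·A_{k,l} and α_n' = √(2·α_n·(2·α_n + 5·(A ∨ 1))), and assume α_n > 0. Then κ_n ≤ (1/σ_n) · (5·(A ∨ 1) + 2·α_n + α_n')·(2·α_n + α_n') / (5·α_n'). -/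
/-!
Write `M = A ∨ 1` and `B = M + 4α/5 + 2α'/5`; the bound to prove is `σₙ κₙ ≤ B`. By strong induction
`σₗ κₗ ≤ B` for all `l`: multiplying the recursion by `σₖ` and choosing `ε = t / σₖ` gives
`σₖ κₖ ≤ A + 0.4 t + α B / t`. For `t = α + α'/2` this is at most `B`, since `A ≤ M` and
`α B = 0.4 t²` by the definition of `α'`, so `M + 0.4 t + α B / t = M + 0.8 t = B`.
-/

open Finset

lemma le_sSup_of_le_of_le (f : ℕ → ℝ) {a b k : ℕ} (hak : a ≤ k) (hkb : k ≤ b) :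
    f k ≤ sSup {x | ∃ j, a ≤ j ∧ j ≤ b ∧ x = f j} := by
  have hfin : {x | ∃ j, a ≤ j ∧ j ≤ b ∧ x = f j}.Finite :=
    ((Set.finite_Icc a b).image f).subset fun _ ⟨j, haj, hjb, hx⟩ => ⟨j, ⟨haj, hjb⟩, hx.symm⟩
  exact le_csSup hfin.bddAbove ⟨k, hak, hkb, rfl⟩

lemma mul_sum_le_mul_sum_div {ι : Type*} {s : Finset ι} {a w x : ι → ℝ} {B r : ℝ} (hr : 0 ≤ r)
    (ha : ∀ l ∈ s, 0 ≤ a l) (hw : ∀ l ∈ s, 0 < w l) (hx : ∀ l ∈ s, w l * x l ≤ B) :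
    r * ∑ l ∈ s, a l * x l ≤ B * ∑ l ∈ s, r / w l * a l := by
  rw [mul_sum, mul_sum]
  refine sum_le_sum fun l hl => ?_
  have hxl : x l ≤ B / w l := by rw [le_div_iff₀ (hw l hl), mul_comm]; exact hx l hl
  calc r * (a l * x l) ≤ r * (a l * (B / w l)) := by gcongr; exact ha l hl
    _ = B * (r / w l * a l) := by ring

lemma mul_le_add_mul_add_div_of_forall_le {x s A c S D t : ℝ} (hs : 0 < s) (ht : 0 < t)
    (hS : s * S ≤ D) (hrec : ∀ ε, 0 < ε → x ≤ A / s + c * ε + 1 / (ε * s) * S) :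
    s * x ≤ A + c * t + D / t := by
  have hx := hrec (t / s) (div_pos ht hs)
  rw [div_mul_cancel₀ t hs.ne'] at hx
  calc s * x ≤ s * (A / s + c * (t / s) + 1 / t * S) := by gcongr
    _ = A + c * t + s * S / t := by field_simp
    _ ≤ A + c * t + D / t := by gcongr

theorem mul_le_of_recursive_bound {n : ℕ} {κ σ : ℕ → ℝ} {A c α B t : ℝ} {Amat : ℕ → ℕ → ℝ}
    (hσ : ∀ k, 1 ≤ k → k ≤ n → 0 < σ k) (hAmat : ∀ k l, 1 ≤ l → l < k → k ≤ n → 0 ≤ Amat k l)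
    (hrec : ∀ ε : ℝ, 0 < ε → ∀ k, 2 ≤ k → k ≤ n →
      κ k ≤ A / σ k + c * ε + (1 / (ε * σ k)) * ∑ l ∈ Icc 1 (k - 1), Amat k l * κ l)
    (hrow : ∀ k, 2 ≤ k → k ≤ n → ∑ l ∈ Icc 1 (k - 1), (σ k / σ l) * Amat k l ≤ α)
    (hB : 0 ≤ B) (h1 : σ 1 * κ 1 ≤ B) (ht : 0 < t) (hfix : A + c * t + α * B / t ≤ B) :
    ∀ k, 1 ≤ k → k ≤ n → σ k * κ k ≤ B := by
  intro k
  induction k using Nat.strong_induction_on with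
  | _ k ih =>
    intro hk1 hkn
    rcases hk1.eq_or_lt with rfl | hk2
    · exact h1
    have hl : ∀ l ∈ Icc 1 (k - 1), 1 ≤ l ∧ l < k ∧ l ≤ n := fun l hl => by
      rw [mem_Icc] at hl; omega
    have hsum : σ k * ∑ l ∈ Icc 1 (k - 1), Amat k l * κ l ≤ α * B :=
      calc σ k * ∑ l ∈ Icc 1 (k - 1), Amat k l * κ l
          ≤ B * ∑ l ∈ Icc 1 (k - 1), σ k / σ l * Amat k l :=
            mul_sum_le_mul_sum_div (hσ k hk1 hkn).le
              (fun l h => hAmat k l (hl l h).1 (hl l h).2.1 hkn)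
              (fun l h => hσ l (hl l h).1 (hl l h).2.2)
              (fun l h => ih l (hl l h).2.1 (hl l h).1 (hl l h).2.2)
        _ ≤ B * α := mul_le_mul_of_nonneg_left (hrow k hk2 hkn) hB
        _ = α * B := mul_comm B α
    exact (mul_le_add_mul_add_div_of_forall_le (hσ k hk1 hkn) ht hsum
      fun ε hε => hrec ε hε k hk2 hkn).trans hfix

lemma bound_eq_of_sq_eq {M α α' : ℝ} (hα' : 0 < α') (hsq : α' ^ 2 = 2 * α * (2 * α + 5 * M)) :
    (5 * M + 2 * α + α') * (2 * α + α') / (5 * α') = M + 4 / 5 * α + 2 / 5 * α' := by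
  field_simp
  linear_combination -hsq

lemma add_add_div_eq_of_sq_eq {M α α' : ℝ} (hα : 0 < α) (hα' : 0 ≤ α')
    (hsq : α' ^ 2 = 2 * α * (2 * α + 5 * M)) :
    M + 0.4 * (α + α' / 2) + α * (M + 4 / 5 * α + 2 / 5 * α') / (α + α' / 2)
      = M + 4 / 5 * α + 2 / 5 * α' := by
  have ht : α + α' / 2 ≠ 0 := by positivity
  field_simp
  linear_combination -2 * hsq

theorem stmt9_general (n : ℕ) (hn : 1 ≤ n) (κ σ : ℕ → ℝ) (A : ℝ) (Amat : ℕ → ℕ → ℝ)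
    (hκ1 : κ 1 ≤ 1)
    (hAmat : ∀ k l, 1 ≤ l → l < k → k ≤ n → 0 ≤ Amat k l)
    (hσ1 : σ 1 = 1) (hσ : ∀ k, 2 ≤ k → k ≤ n → 0 < σ k)
    (hrec : ∀ ε : ℝ, 0 < ε → ∀ k, 2 ≤ k → k ≤ n →
      κ k ≤ A / σ k + 0.4 * ε +
        (1 / (ε * σ k)) * ∑ l ∈ Finset.Icc 1 (k - 1), Amat k l * κ l)
    (αn αn' : ℝ)
    (hαn : αn = sSup {x | ∃ k, 2 ≤ k ∧ k ≤ n ∧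
      x = ∑ l ∈ Finset.Icc 1 (k - 1), (σ k / σ l) * Amat k l})
    (hαn' : αn' = Real.sqrt (2 * αn * (2 * αn + 5 * max A 1)))
    (hαpos : 0 < αn) :
    κ n ≤ (1 / σ n) *
      ((5 * max A 1 + 2 * αn + αn') * (2 * αn + αn')) / (5 * αn') := by
  have hM : 1 ≤ max A 1 := le_max_right A 1
  have hpos : 0 < 2 * αn * (2 * αn + 5 * max A 1) := by positivity
  have hα' : 0 < αn' := hαn' ▸ Real.sqrt_pos.2 hpos
  have hsq : αn' ^ 2 = 2 * αn * (2 * αn + 5 * max A 1) := hαn' ▸ Real.sq_sqrt hpos.le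
  have hσpos : ∀ k, 1 ≤ k → k ≤ n → 0 < σ k := fun k hk1 hkn => by
    rcases hk1.eq_or_lt with rfl | hk2
    · exact hσ1 ▸ one_pos
    · exact hσ k hk2 hkn
  have hfix := add_add_div_eq_of_sq_eq hαpos hα'.le hsq
  have hbound := mul_le_of_recursive_bound (B := max A 1 + 4 / 5 * αn + 2 / 5 * αn')
    (t := αn + αn' / 2) hσpos hAmat hrec
    (fun k hk2 hkn => hαn ▸ le_sSup_of_le_of_le _ hk2 hkn) (by positivity)
    (by rw [hσ1, one_mul]; linarith) (by positivity)
    (by linarith [le_max_left A 1]) n hn le_rfl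
  rw [mul_div_assoc, bound_eq_of_sq_eq hα' hsq, one_div_mul_eq_div,
    le_div_iff₀ (hσpos n hn le_rfl), mul_comm]
  exact hbound

/-- Lemma 2.10 (recursive/inductive lemma for Kolmogorov bounds). -/
theorem stmt9 (n : ℕ) (hn : 1 ≤ n) (κ σ : ℕ → ℝ) (A : ℝ) (Amat : ℕ → ℕ → ℝ)
    (hκ0 : ∀ k, 1 ≤ k → k ≤ n → 0 ≤ κ k) (hκ1 : κ 1 ≤ 1)
    (hA : 0 ≤ A)
    (hAmat : ∀ k l, 1 ≤ l → l < k → k ≤ n → 0 ≤ Amat k l)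
    (hσ1 : σ 1 = 1) (hσ : ∀ k, 2 ≤ k → k ≤ n → 0 < σ k)
    (hrec : ∀ ε : ℝ, 0 < ε → ∀ k, 2 ≤ k → k ≤ n →
      κ k ≤ A / σ k + 0.4 * ε +
        (1 / (ε * σ k)) * ∑ l ∈ Finset.Icc 1 (k - 1), Amat k l * κ l)
    (αn αn' : ℝ)
    (hαn : αn = sSup {x | ∃ k, 2 ≤ k ∧ k ≤ n ∧
      x = ∑ l ∈ Finset.Icc 1 (k - 1), (σ k / σ l) * Amat k l})
    (hαn' : αn' = Real.sqrt (2 * αn * (2 * αn + 5 * max A 1)))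
    (hαpos : 0 < αn) :
    κ n ≤ (1 / σ n) *
      ((5 * max A 1 + 2 * αn + αn') * (2 * αn + αn')) / (5 * αn') :=
  stmt9_general n hn κ σ A Amat hκ1 hAmat hσ1 hσ hrec αn αn' hαn hαn' hαpos
end

section
/- Let (W, W', G) be a Stein coupling and suppose ρ : ℝ → ℝ is a locally integrable function satisfying E[W·f(W)] = ∫_ℝ f'(u)·ρ(u) du for every bounded Lipschitz function f : ℝ → ℝ (with f' its almost-everywhere derivative). Then for Lebesgue-almost every u ∈ ℝ, E[ G·( 1[W ≤ u < W'] − 1[W' ≤ u < W] ) ] = ρ(u). -/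
/-!
Pair both sides with a smooth compactly supported test function `g` and let `F` be a primitive
of `g`. Since `∫ g(u) (1[a ≤ u < b] − 1[b ≤ u < a]) du = F b − F a`, Fubini turns the pairing of
the left-hand side into `E[G (F(W') − F(W))]`; the Stein coupling identity makes this `E[W F(W)]`,
and the density hypothesis (applicable since `F` is bounded and Lipschitz) makes it `∫ g ρ`.
Two locally integrable functions with the same pairings against all test functions agree a.e.
-/

open MeasureTheory ProbabilityTheory Set
open scoped ENNReal Classical

noncomputable section

variable {Ω : Type*} [MeasurableSpace Ω]

/-- A triple `(W, W', G)` of square-integrable random variables is a *Stein coupling* if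
`E[G f(W') − G f(W)] = E[W f(W)]` for every Lipschitz `f` for which the expectations exist. -/
def SteinCoupling (μ : Measure Ω) (W W' G : Ω → ℝ) : Prop :=
  MemLp W 2 μ ∧ MemLp W' 2 μ ∧ MemLp G 2 μ ∧
  ∀ f : ℝ → ℝ, (∃ K : NNReal, LipschitzWith K f) →
    Integrable (fun ω => G ω * f (W' ω)) μ →
    Integrable (fun ω => G ω * f (W ω)) μ →
    Integrable (fun ω => W ω * f (W ω)) μ →
    ∫ ω, (G ω * f (W' ω) - G ω * f (W ω)) ∂μ = ∫ ω, W ω * f (W ω) ∂μ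

def orientedIcoIndicator (a b u : ℝ) : ℝ :=
  (if a ≤ u ∧ u < b then 1 else 0) - (if b ≤ u ∧ u < a then 1 else 0)

lemma orientedIcoIndicator_eq (a b u : ℝ) :
    orientedIcoIndicator a b u = (Ico a b).indicator 1 u - (Ico b a).indicator 1 u := by
  simp only [orientedIcoIndicator, indicator_apply, mem_Ico, Pi.one_apply]

lemma abs_orientedIcoIndicator_le_one (a b u : ℝ) : |orientedIcoIndicator a b u| ≤ 1 := by
  unfold orientedIcoIndicator
  split_ifs <;> norm_num

lemma measurable_orientedIcoIndicator :
    Measurable fun p : ℝ × ℝ × ℝ => orientedIcoIndicator p.1 p.2.1 p.2.2 := by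
  unfold orientedIcoIndicator
  exact (Measurable.ite ((measurableSet_le measurable_fst measurable_snd.snd).inter
      (measurableSet_lt measurable_snd.snd measurable_snd.fst)) measurable_const measurable_const).sub
    (Measurable.ite ((measurableSet_le measurable_snd.fst measurable_snd.snd).inter
      (measurableSet_lt measurable_snd.snd measurable_fst)) measurable_const measurable_const)

lemma integral_mul_orientedIcoIndicator {g : ℝ → ℝ} (hg : Integrable g) (a b : ℝ) :
    ∫ u, g u * orientedIcoIndicator a b u = ∫ u in a..b, g u := by
  simp_rw [orientedIcoIndicator_eq, mul_sub, ← indicator_mul_right, Pi.one_apply, mul_one]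
  rw [integral_sub (hg.indicator measurableSet_Ico) (hg.indicator measurableSet_Ico),
    MeasureTheory.integral_indicator measurableSet_Ico,
    MeasureTheory.integral_indicator measurableSet_Ico,
    integral_Ico_eq_integral_Ioo, integral_Ico_eq_integral_Ioo]
  rcases le_total a b with hab | hba
  · rw [Ioo_eq_empty_of_le hab, setIntegral_empty, sub_zero, intervalIntegral.integral_of_le hab,
      integral_Ioc_eq_integral_Ioo]
  · rw [Ioo_eq_empty_of_le hba, setIntegral_empty, zero_sub, intervalIntegral.integral_symm,
      intervalIntegral.integral_of_le hba, integral_Ioc_eq_integral_Ioo]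

lemma abs_intervalIntegral_le_integral_norm {g : ℝ → ℝ} (hg : Integrable g) (a b : ℝ) :
    |∫ t in a..b, g t| ≤ ∫ t, ‖g t‖ :=
  intervalIntegral.norm_integral_le_integral_norm_uIoc.trans
    (setIntegral_le_integral hg.norm (.of_forall fun _ => norm_nonneg _))

lemma lipschitzWith_intervalIntegral {g : ℝ → ℝ} {C : NNReal} (hg : Continuous g)
    (hC : ∀ t, ‖g t‖ ≤ C) (a : ℝ) : LipschitzWith C fun x => ∫ t in a..x, g t := by
  refine lipschitzWith_of_nnnorm_deriv_le
    (fun x => (hg.integral_hasStrictDerivAt a x).hasDerivAt.differentiableAt) fun x => ?_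
  rw [hg.deriv_integral]
  exact_mod_cast hC x

section Coupling

variable {μ : Measure Ω} {W W' G : Ω → ℝ}

lemma aestronglyMeasurable_mul_orientedIcoIndicator {ν : Measure ℝ} [SFinite ν]
    (hW : AEMeasurable W μ) (hW' : AEMeasurable W' μ) (hG : AEStronglyMeasurable G μ) :
    AEStronglyMeasurable (fun p : ℝ × Ω => G p.2 * orientedIcoIndicator (W p.2) (W' p.2) p.1)
      (ν.prod μ) :=
  hG.comp_snd.mul (measurable_orientedIcoIndicator.comp_aemeasurable
    (hW.comp_snd.prodMk (hW'.comp_snd.prodMk measurable_fst.aemeasurable))).aestronglyMeasurable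

lemma norm_mul_orientedIcoIndicator_le (x a b u : ℝ) : ‖x * orientedIcoIndicator a b u‖ ≤ ‖x‖ := by
  rw [norm_mul]
  exact mul_le_of_le_one_right (norm_nonneg x) (abs_orientedIcoIndicator_le_one a b u)

lemma locallyIntegrable_integral_mul_orientedIcoIndicator {ν : Measure ℝ} [SFinite ν]
    [IsLocallyFiniteMeasure ν] [SFinite μ]
    (hW : AEMeasurable W μ) (hW' : AEMeasurable W' μ) (hG : Integrable G μ) :
    LocallyIntegrable (fun u => ∫ ω, G ω * orientedIcoIndicator (W ω) (W' ω) u ∂μ) ν :=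
  (memLp_top_of_bound (aestronglyMeasurable_mul_orientedIcoIndicator hW hW'
    hG.aestronglyMeasurable).integral_prod_right' (∫ ω, ‖G ω‖ ∂μ) (.of_forall fun _ =>
      norm_integral_le_of_norm_le hG.norm (.of_forall fun _ =>
        norm_mul_orientedIcoIndicator_le _ _ _ _))).locallyIntegrable le_top

lemma integral_mul_integral_mul_orientedIcoIndicator [SFinite μ] {g : ℝ → ℝ} (hg : Integrable g)
    (hW : AEMeasurable W μ) (hW' : AEMeasurable W' μ) (hG : Integrable G μ) :
    ∫ u, g u * ∫ ω, G ω * orientedIcoIndicator (W ω) (W' ω) u ∂μ =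
      ∫ ω, G ω * (∫ u in W ω..W' ω, g u) ∂μ := by
  have hprod_int : Integrable (Function.uncurry fun u ω =>
      g u * (G ω * orientedIcoIndicator (W ω) (W' ω) u)) (volume.prod μ) := by
    refine (hg.mul_prod hG).mono (hg.aestronglyMeasurable.comp_fst.mul
      (aestronglyMeasurable_mul_orientedIcoIndicator hW hW' hG.aestronglyMeasurable))
      (.of_forall fun p => ?_)
    rw [Function.uncurry_apply_pair, norm_mul, norm_mul (g p.1)]
    exact mul_le_mul_of_nonneg_left (norm_mul_orientedIcoIndicator_le _ _ _ _) (norm_nonneg _)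
  calc ∫ u, g u * ∫ ω, G ω * orientedIcoIndicator (W ω) (W' ω) u ∂μ
      = ∫ u, ∫ ω, g u * (G ω * orientedIcoIndicator (W ω) (W' ω) u) ∂μ := by
        simp_rw [integral_const_mul]
    _ = ∫ ω, (∫ u, g u * (G ω * orientedIcoIndicator (W ω) (W' ω) u)) ∂μ :=
        integral_integral_swap hprod_int
    _ = ∫ ω, G ω * (∫ u in W ω..W' ω, g u) ∂μ := by
        simp_rw [mul_left_comm (g _), integral_const_mul, integral_mul_orientedIcoIndicator hg]

end Coupling

/-- Lemma 5.1: if `ρ` is a (zero-bias) density, i.e. `E[W f(W)] = ∫ f' ρ` for all bounded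
Lipschitz `f`, then for almost every `u`,
`E[G (1[W ≤ u < W'] − 1[W' ≤ u < W])] = ρ(u)`. -/
theorem stmt14 (μ : Measure Ω) [IsProbabilityMeasure μ] (W W' G : Ω → ℝ)
    (hSC : SteinCoupling μ W W' G)
    (ρ : ℝ → ℝ) (hρloc : LocallyIntegrable ρ volume)
    (hρ : ∀ (f f' : ℝ → ℝ), (∃ K : NNReal, LipschitzWith K f) →
      (∃ B : ℝ, ∀ x, |f x| ≤ B) →
      (∀ᵐ x ∂(volume : Measure ℝ), HasDerivAt f (f' x) x) →
      ∫ ω, W ω * f (W ω) ∂μ = ∫ x, f' x * ρ x) :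
    ∀ᵐ u ∂(volume : Measure ℝ),
      (∫ ω, G ω * ((if W ω ≤ u ∧ u < W' ω then (1 : ℝ) else 0) -
        (if W' ω ≤ u ∧ u < W ω then (1 : ℝ) else 0)) ∂μ) = ρ u := by
  obtain ⟨hW, hW', hG, hstein⟩ := hSC
  have hWm := hW.aestronglyMeasurable.aemeasurable
  have hW'm := hW'.aestronglyMeasurable.aemeasurable
  have hGi := hG.integrable one_le_two
  refine ae_eq_of_integral_contDiff_smul_eq
    (locallyIntegrable_integral_mul_orientedIcoIndicator hWm hW'm hGi) hρloc fun g hg hgc => ?_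
  set F := fun x => ∫ t in (0 : ℝ)..x, g t
  have hgi := hg.continuous.integrable_of_hasCompactSupport (μ := volume) hgc
  obtain ⟨C, hC⟩ := hgc.exists_bound_of_continuous hg.continuous
  have hF_lip : LipschitzWith C.toNNReal F := lipschitzWith_intervalIntegral hg.continuous
    (fun t => (hC t).trans (le_max_left _ _)) 0
  have hF_bdd : ∀ x, |F x| ≤ ∫ t, ‖g t‖ := abs_intervalIntegral_le_integral_norm hgi 0
  have hF_int : ∀ {X Y : Ω → ℝ}, Integrable X μ → AEMeasurable Y μ →
      Integrable (fun ω => X ω * F (Y ω)) μ := fun {_ Y} hX hY =>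
    hX.mul_bdd (hF_lip.continuous.measurable.comp_aemeasurable hY).aestronglyMeasurable
      (.of_forall fun ω => hF_bdd (Y ω))
  calc ∫ u, g u • ∫ ω, G ω * orientedIcoIndicator (W ω) (W' ω) u ∂μ
      = ∫ ω, G ω * (∫ u in W ω..W' ω, g u) ∂μ :=
        integral_mul_integral_mul_orientedIcoIndicator hgi hWm hW'm hGi
    _ = ∫ ω, (G ω * F (W' ω) - G ω * F (W ω)) ∂μ := by
        simp_rw [F, ← mul_sub, intervalIntegral.integral_interval_sub_left
          (hg.continuous.intervalIntegrable _ _) (hg.continuous.intervalIntegrable _ _)]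
    _ = ∫ ω, W ω * F (W ω) ∂μ := hstein F ⟨_, hF_lip⟩ (hF_int hGi hW'm) (hF_int hGi hWm)
        (hF_int (hW.integrable one_le_two) hWm)
    _ = ∫ u, g u • ρ u := hρ F g ⟨_, hF_lip⟩ ⟨_, hF_bdd⟩
        (.of_forall fun x => (hg.continuous.integral_hasStrictDerivAt 0 x).hasDerivAt)
end
end
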